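/- arXiv:1608.06712 — 2 statements merged into one kernel-verified Lean document; each statement's English description precedes it below -/
import Mathlib

section
/- The core of a double groupoid is a groupoid: the set E(B) of boxes E with t(E), r(E) ∈ P, equipped with source s(E) = bl(E), target e(E) = tr(E), identities Θ_P = id∘id(P), multiplication E∘F = {(id l(F), F) over (E, id b(F))}, and inverse E^(-1) = (E · id b(E)^{-1})^v, satisfies the groupoid axioms (associativity, unit laws, and inverse laws). -/
/-- A (discrete) double groupoid: a set of boxes `B` with two compatible groupoid
structures, with horizontal edge groupoid `H` and vertical edge groupoid `V`,
both over a common base `P`. -/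
structure DGpd (B : Type*) (V : Type*) (H : Type*) (P : Type*) where
  sV : V → P
  eV : V → P
  idV : P → V
  mulV : V → V → V
  invV : V → V
  sH : H → P
  eH : H → P
  idH : P → H
  mulH : H → H → H
  invH : H → H
  t : B → H
  b : B → H
  l : B → V
  r : B → V
  corner_tl : ∀ A, sH (t A) = sV (l A)
  corner_tr : ∀ A, eH (t A) = sV (r A)
  corner_bl : ∀ A, sH (b A) = eV (l A)
  corner_br : ∀ A, eH (b A) = eV (r A)
  idh : V → B
  idv : H → B
  hc : B → B → B
  vc : B → B → B
  hi : B → B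
  vi : B → B
  -- groupoid axioms for V
  sV_id : ∀ p, sV (idV p) = p
  eV_id : ∀ p, eV (idV p) = p
  sV_mul : ∀ g h, eV g = sV h → sV (mulV g h) = sV g
  eV_mul : ∀ g h, eV g = sV h → eV (mulV g h) = eV h
  mulV_assoc : ∀ g h k, eV g = sV h → eV h = sV k →
    mulV (mulV g h) k = mulV g (mulV h k)
  idV_mul : ∀ g, mulV (idV (sV g)) g = g
  mulV_id : ∀ g, mulV g (idV (eV g)) = g
  sV_inv : ∀ g, sV (invV g) = eV g
  eV_inv : ∀ g, eV (invV g) = sV g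
  mulV_inv : ∀ g, mulV g (invV g) = idV (sV g)
  invV_mul : ∀ g, mulV (invV g) g = idV (eV g)
  -- groupoid axioms for H
  sH_id : ∀ p, sH (idH p) = p
  eH_id : ∀ p, eH (idH p) = p
  sH_mul : ∀ x y, eH x = sH y → sH (mulH x y) = sH x
  eH_mul : ∀ x y, eH x = sH y → eH (mulH x y) = eH y
  mulH_assoc : ∀ x y z, eH x = sH y → eH y = sH z →
    mulH (mulH x y) z = mulH x (mulH y z)
  idH_mul : ∀ x, mulH (idH (sH x)) x = x
  mulH_id : ∀ x, mulH x (idH (eH x)) = x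
  sH_inv : ∀ x, sH (invH x) = eH x
  eH_inv : ∀ x, eH (invH x) = sH x
  mulH_inv : ∀ x, mulH x (invH x) = idH (sH x)
  invH_mul : ∀ x, mulH (invH x) x = idH (eH x)
  -- sides of identity boxes
  idh_t : ∀ g, t (idh g) = idH (sV g)
  idh_b : ∀ g, b (idh g) = idH (eV g)
  idh_l : ∀ g, l (idh g) = g
  idh_r : ∀ g, r (idh g) = g
  idv_t : ∀ x, t (idv x) = x
  idv_b : ∀ x, b (idv x) = x
  idv_l : ∀ x, l (idv x) = idV (sH x)
  idv_r : ∀ x, r (idv x) = idV (eH x)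
  -- horizontal groupoid structure on boxes (base V)
  hc_t : ∀ A B, r A = l B → t (hc A B) = mulH (t A) (t B)
  hc_b : ∀ A B, r A = l B → b (hc A B) = mulH (b A) (b B)
  hc_l : ∀ A B, r A = l B → l (hc A B) = l A
  hc_r : ∀ A B, r A = l B → r (hc A B) = r B
  hc_assoc : ∀ A B C, r A = l B → r B = l C → hc (hc A B) C = hc A (hc B C)
  idh_hc : ∀ A, hc (idh (l A)) A = A
  hc_idh : ∀ A, hc A (idh (r A)) = A
  hi_l : ∀ A, l (hi A) = r A
  hi_r : ∀ A, r (hi A) = l A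
  hi_t : ∀ A, t (hi A) = invH (t A)
  hi_b : ∀ A, b (hi A) = invH (b A)
  hc_hi : ∀ A, hc A (hi A) = idh (l A)
  hi_hc : ∀ A, hc (hi A) A = idh (r A)
  -- vertical groupoid structure on boxes (base H)
  vc_t : ∀ A B, b A = t B → t (vc A B) = t A
  vc_b : ∀ A B, b A = t B → b (vc A B) = b B
  vc_l : ∀ A B, b A = t B → l (vc A B) = mulV (l A) (l B)
  vc_r : ∀ A B, b A = t B → r (vc A B) = mulV (r A) (r B)
  vc_assoc : ∀ A B C, b A = t B → b B = t C → vc (vc A B) C = vc A (vc B C)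
  idv_vc : ∀ A, vc (idv (t A)) A = A
  vc_idv : ∀ A, vc A (idv (b A)) = A
  vi_t : ∀ A, t (vi A) = b A
  vi_b : ∀ A, b (vi A) = t A
  vi_l : ∀ A, l (vi A) = invV (l A)
  vi_r : ∀ A, r (vi A) = invV (r A)
  vc_vi : ∀ A, vc A (vi A) = idv (t A)
  vi_vc : ∀ A, vc (vi A) A = idv (b A)
  -- the identity boxes are functorial
  idh_mulV : ∀ g h, eV g = sV h → vc (idh g) (idh h) = idh (mulV g h)
  idv_mulH : ∀ x y, eH x = sH y → hc (idv x) (idv y) = idv (mulH x y)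
  id_id : ∀ p, idh (idV p) = idv (idH p)
  -- the interchange law
  interchange : ∀ K L M N, r K = l L → r M = l N → b K = t M → b L = t N →
    vc (hc K L) (hc M N) = hc (vc K M) (vc L N)

namespace DGpd

variable {B V H P : Type*} (D : DGpd B V H P)

/-- The totally degenerate box at a point. -/
def Theta (p : P) : B := D.idh (D.idV p)

/-- A box all of whose four sides are identities at `p`; i.e. an element of the
fiber `K(B)_p` of the abelian group bundle `K(B)`. -/
def InFiber (p : P) (A : B) : Prop :=
  D.t A = D.idH p ∧ D.b A = D.idH p ∧ D.l A = D.idV p ∧ D.r A = D.idV p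

/-- A box belonging to the core groupoid: its top and right sides are identities. -/
def IsCore (A : B) : Prop :=
  (∃ p, D.t A = D.idH p) ∧ (∃ p, D.r A = D.idV p)

/-- Source of the core groupoid: the bottom-left vertex. -/
def coreSrc (A : B) : P := D.sH (D.b A)

/-- Target of the core groupoid: the top-right vertex. -/
def coreTgt (A : B) : P := D.eH (D.t A)

/-- Core multiplication `E ∘ F`. -/
def coreMul (E F : B) : B :=
  D.vc (D.hc (D.idh (D.l F)) F) (D.hc E (D.idv (D.b F)))

/-- Core inversion `E ↦ E^{(-1)} = (E ⋅ id_v(b(E)^{-1}))^v`. -/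
def coreInv (E : B) : B := D.vi (D.hc E (D.idv (D.invH (D.b E))))

/-- The core action of the core groupoid on boxes:
`E ⊸ A = {(id l(A), A) over (E, id b(A))}`. -/
def coreAct (E A : B) : B :=
  D.vc (D.hc (D.idh (D.l A)) A) (D.hc E (D.idv (D.b A)))

end DGpd

/-! Because `id l(F)` is a horizontal unit, `E ∘ F` is simply `F` stacked on top of
`E ⋅ id b(F)`. Whiskering on the right by a vertical identity box distributes over vertical
composition (interchange law), so associativity reduces to `(E ⋅ id x) ⋅ id y = E ⋅ id (x y)`.
For the inverse laws, `E^{(-1)}` is the vertical inverse of `X = E ⋅ id b(E)^{-1}`: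
`E ∘ E^{(-1)}` is `X^v` over `X`, and `E^{(-1)} ⋅ id b(E) = (X ⋅ id b(E))^v = E^v`. -/

namespace DGpd

variable {B V H P : Type*} (D : DGpd B V H P)

lemma invV_idV (p : P) : D.invV (D.idV p) = D.idV p := by
  have h := D.idV_mul (D.invV (D.idV p))
  rw [D.sV_inv, D.eV_id, D.mulV_inv, D.sV_id] at h
  exact h.symm

lemma vc_idv_idv (x : H) : D.vc (D.idv x) (D.idv x) = D.idv x := by
  simpa only [D.idv_t] using D.idv_vc (D.idv x)

lemma vi_eq_of_vc_eq_idv {A X : B} (hX : D.b A = D.t X) (h : D.vc A X = D.idv (D.t A)) :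
    D.vi A = X :=
  calc D.vi A = D.vc (D.vi A) (D.idv (D.t A)) := by rw [← D.vi_b A, D.vc_idv]
    _ = D.vc (D.vc (D.vi A) A) X := by rw [← h, D.vc_assoc _ _ _ (D.vi_b A) hX]
    _ = X := by rw [D.vi_vc, hX, D.idv_vc]

lemma vi_idv (x : H) : D.vi (D.idv x) = D.idv x :=
  D.vi_eq_of_vc_eq_idv (by rw [D.idv_b, D.idv_t]) (by rw [D.vc_idv_idv, D.idv_t])

lemma vi_hc {A C : B} (h : D.r A = D.l C) :
    D.vi (D.hc A C) = D.hc (D.vi A) (D.vi C) := by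
  have hv : D.r (D.vi A) = D.l (D.vi C) := by rw [D.vi_r, D.vi_l, h]
  have ht : D.eH (D.t A) = D.sH (D.t C) := by rw [D.corner_tr, D.corner_tl, h]
  refine D.vi_eq_of_vc_eq_idv (by rw [D.hc_b _ _ h, D.hc_t _ _ hv, D.vi_t, D.vi_t]) ?_
  rw [D.interchange _ _ _ _ h hv (D.vi_t A).symm (D.vi_t C).symm, D.vc_vi, D.vc_vi,
    D.idv_mulH _ _ ht, D.hc_t _ _ h]

lemma hc_vc_idv {A C : B} {x : H} (hA : D.r A = D.l (D.idv x)) (hC : D.r C = D.l (D.idv x))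
    (hAC : D.b A = D.t C) :
    D.hc (D.vc A C) (D.idv x) = D.vc (D.hc A (D.idv x)) (D.hc C (D.idv x)) := by
  conv_lhs => rw [← D.vc_idv_idv x]
  exact (D.interchange _ _ _ _ hA hC hAC (by rw [D.idv_b, D.idv_t])).symm

lemma theta_eq_idv (p : P) : D.Theta p = D.idv (D.idH p) := D.id_id p

lemma t_theta (p : P) : D.t (D.Theta p) = D.idH p := by
  rw [theta_eq_idv, D.idv_t]

lemma b_theta (p : P) : D.b (D.Theta p) = D.idH p := by
  rw [theta_eq_idv, D.idv_b]

lemma r_theta (p : P) : D.r (D.Theta p) = D.idV p := D.idh_r _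

lemma isCore_theta (p : P) : D.IsCore (D.Theta p) :=
  ⟨⟨p, D.t_theta p⟩, ⟨p, D.r_theta p⟩⟩

lemma coreSrc_theta (p : P) : D.coreSrc (D.Theta p) = p := by
  rw [coreSrc, b_theta, D.sH_id]

lemma coreTgt_theta (p : P) : D.coreTgt (D.Theta p) = p := by
  rw [coreTgt, t_theta, D.eH_id]

lemma coreMul_eq (E F : B) : D.coreMul E F = D.vc F (D.hc E (D.idv (D.b F))) := by
  rw [coreMul, D.idh_hc]

variable {D} {E F G : B}

lemma IsCore.t_eq (hE : D.IsCore E) : D.t E = D.idH (D.coreTgt E) := by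
  obtain ⟨⟨p, hp⟩, -⟩ := hE
  rw [coreTgt, hp, D.eH_id]

lemma IsCore.r_eq (hE : D.IsCore E) : D.r E = D.idV (D.coreTgt E) := by
  obtain ⟨-, ⟨p, hp⟩⟩ := hE
  rw [coreTgt, D.corner_tr, hp, D.sV_id]

lemma IsCore.eH_b (hE : D.IsCore E) : D.eH (D.b E) = D.coreTgt E := by
  rw [D.corner_br, hE.r_eq, D.eV_id]

lemma IsCore.hc_theta (hE : D.IsCore E) : D.hc E (D.Theta (D.coreTgt E)) = E := by
  rw [Theta, ← hE.r_eq, D.hc_idh]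

lemma IsCore.r_eq_l_idv (hE : D.IsCore E) (hEF : D.coreTgt E = D.coreSrc F) :
    D.r E = D.l (D.idv (D.b F)) := by
  rw [D.idv_l, hE.r_eq, hEF, coreSrc]

lemma IsCore.t_hc_idv (hE : D.IsCore E) (hEF : D.coreTgt E = D.coreSrc F) :
    D.t (D.hc E (D.idv (D.b F))) = D.b F := by
  rw [D.hc_t _ _ (hE.r_eq_l_idv hEF), hE.t_eq, D.idv_t, hEF, coreSrc, D.idH_mul]

section coreMul

variable (hE : D.IsCore E) (hEF : D.coreTgt E = D.coreSrc F)
include hE hEF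

lemma t_coreMul : D.t (D.coreMul E F) = D.t F := by
  rw [coreMul_eq, D.vc_t _ _ (hE.t_hc_idv hEF).symm]

lemma r_coreMul : D.r (D.coreMul E F) = D.r F := by
  rw [coreMul_eq, D.vc_r _ _ (hE.t_hc_idv hEF).symm, D.hc_r _ _ (hE.r_eq_l_idv hEF),
    D.idv_r, D.corner_br, D.mulV_id]

lemma b_coreMul : D.b (D.coreMul E F) = D.mulH (D.b E) (D.b F) := by
  rw [coreMul_eq, D.vc_b _ _ (hE.t_hc_idv hEF).symm, D.hc_b _ _ (hE.r_eq_l_idv hEF),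
    D.idv_b]

lemma isCore_coreMul (hF : D.IsCore F) : D.IsCore (D.coreMul E F) := by
  obtain ⟨⟨p, hp⟩, ⟨q, hq⟩⟩ := hF
  exact ⟨⟨p, by rw [t_coreMul hE hEF, hp]⟩, ⟨q, by rw [r_coreMul hE hEF, hq]⟩⟩

lemma coreSrc_coreMul : D.coreSrc (D.coreMul E F) = D.coreSrc E := by
  rw [coreSrc, b_coreMul hE hEF, D.sH_mul _ _ (hE.eH_b.trans hEF), coreSrc]

lemma coreTgt_coreMul : D.coreTgt (D.coreMul E F) = D.coreTgt F := by
  rw [coreTgt, t_coreMul hE hEF, coreTgt]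

lemma coreMul_assoc (hF : D.IsCore F) (hFG : D.coreTgt F = D.coreSrc G) :
    D.coreMul (D.coreMul E F) G = D.coreMul E (D.coreMul F G) := by
  have hbF : D.eH (D.b F) = D.sH (D.b G) := hF.eH_b.trans hFG
  have hlow : D.r (D.hc E (D.idv (D.b F))) = D.l (D.idv (D.b G)) := by
    rw [D.hc_r _ _ (hE.r_eq_l_idv hEF), D.idv_r, D.idv_l, hbF]
  have hwhisker : D.hc (D.hc E (D.idv (D.b F))) (D.idv (D.b G))
      = D.hc E (D.idv (D.mulH (D.b F) (D.b G))) := by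
    rw [D.hc_assoc _ _ _ (hE.r_eq_l_idv hEF) (by rw [D.idv_r, D.idv_l, hbF]),
      D.idv_mulH _ _ hbF]
  have hstack : D.b (D.hc F (D.idv (D.b G))) = D.t (D.hc E (D.idv (D.mulH (D.b F) (D.b G)))) := by
    rw [D.hc_b _ _ (hF.r_eq_l_idv hFG), D.idv_b, ← hwhisker, D.hc_t _ _ hlow, hE.t_hc_idv hEF,
      D.idv_t]
  rw [D.coreMul_eq (D.coreMul E F), D.coreMul_eq E F, D.coreMul_eq E, b_coreMul hF hFG,
    D.coreMul_eq F G, D.hc_vc_idv (hF.r_eq_l_idv hFG) hlow (hE.t_hc_idv hEF).symm, hwhisker,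
    D.vc_assoc _ _ _ (hF.t_hc_idv hFG).symm hstack]

end coreMul

lemma theta_coreMul (E : B) : D.coreMul (D.Theta (D.coreSrc E)) E = E := by
  rw [coreMul_eq, theta_eq_idv, coreSrc, D.idv_mulH _ _ (D.eH_id _), D.idH_mul, D.vc_idv]

lemma coreMul_theta (hE : D.IsCore E) : D.coreMul E (D.Theta (D.coreTgt E)) = E := by
  rw [coreMul_eq, b_theta, ← theta_eq_idv, hE.hc_theta, theta_eq_idv, ← hE.t_eq, D.idv_vc]

section coreInv

variable (hE : D.IsCore E)
include hE

lemma IsCore.r_eq_l_idv_invH_b : D.r E = D.l (D.idv (D.invH (D.b E))) := by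
  rw [D.idv_l, D.sH_inv, hE.eH_b, hE.r_eq]

lemma t_coreInv : D.t (D.coreInv E) = D.idH (D.coreSrc E) := by
  rw [coreInv, D.vi_t, D.hc_b _ _ hE.r_eq_l_idv_invH_b, D.idv_b, D.mulH_inv, coreSrc]

lemma b_coreInv : D.b (D.coreInv E) = D.invH (D.b E) := by
  rw [coreInv, D.vi_b, D.hc_t _ _ hE.r_eq_l_idv_invH_b, hE.t_eq, D.idv_t, ← hE.eH_b,
    ← D.sH_inv, D.idH_mul]

lemma r_coreInv : D.r (D.coreInv E) = D.idV (D.coreSrc E) := by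
  rw [coreInv, D.vi_r, D.hc_r _ _ hE.r_eq_l_idv_invH_b, D.idv_r, D.eH_inv, D.invV_idV,
    coreSrc]

lemma isCore_coreInv : D.IsCore (D.coreInv E) :=
  ⟨⟨_, t_coreInv hE⟩, ⟨_, r_coreInv hE⟩⟩

lemma coreSrc_coreInv : D.coreSrc (D.coreInv E) = D.coreTgt E := by
  rw [coreSrc, b_coreInv hE, D.sH_inv, hE.eH_b]

lemma coreTgt_coreInv : D.coreTgt (D.coreInv E) = D.coreSrc E := by
  rw [coreTgt, t_coreInv hE, D.eH_id]

lemma coreMul_coreInv : D.coreMul E (D.coreInv E) = D.Theta (D.coreSrc E) := by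
  rw [coreMul_eq, b_coreInv hE, coreInv, D.vi_vc, D.hc_b _ _ hE.r_eq_l_idv_invH_b, D.idv_b,
    D.mulH_inv, theta_eq_idv, coreSrc]

lemma coreInv_coreMul : D.coreMul (D.coreInv E) E = D.Theta (D.coreTgt E) := by
  have hX := hE.r_eq_l_idv_invH_b
  have hcancel : D.hc (D.hc E (D.idv (D.invH (D.b E)))) (D.idv (D.b E)) = E := by
    rw [D.hc_assoc _ _ _ hX (by rw [D.idv_r, D.idv_l, D.eH_inv]),
      D.idv_mulH _ _ (D.eH_inv _), D.invH_mul, hE.eH_b, ← theta_eq_idv,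
      hE.hc_theta]
  have hbottom : D.hc (D.coreInv E) (D.idv (D.b E)) = D.vi E := by
    rw [coreInv, ← D.vi_idv (D.b E),
      ← D.vi_hc (by rw [D.hc_r _ _ hX, D.idv_r, D.idv_l, D.eH_inv]), hcancel]
  rw [coreMul_eq, hbottom, D.vc_vi, hE.t_eq, theta_eq_idv]

end coreInv

end DGpd

/-- The core of a double groupoid is a groupoid: the set of boxes `E`
with `t(E), r(E) ∈ P`, equipped with source `bl`, target `tr`, identities `Θ_p`,
the core multiplication and the core inverse, satisfies the groupoid axioms. -/
theorem core_is_groupoid {B V H P : Type*} (D : DGpd B V H P) :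
    -- closure and compatibility of sources/targets under multiplication
    (∀ E F, D.IsCore E → D.IsCore F → D.coreTgt E = D.coreSrc F →
      D.IsCore (D.coreMul E F) ∧ D.coreSrc (D.coreMul E F) = D.coreSrc E ∧
        D.coreTgt (D.coreMul E F) = D.coreTgt F) ∧
    -- the identities Θ_p
    (∀ p : P, D.IsCore (D.Theta p) ∧ D.coreSrc (D.Theta p) = p ∧
      D.coreTgt (D.Theta p) = p) ∧
    -- associativity
    (∀ E F G, D.IsCore E → D.IsCore F → D.IsCore G →
      D.coreTgt E = D.coreSrc F → D.coreTgt F = D.coreSrc G →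
      D.coreMul (D.coreMul E F) G = D.coreMul E (D.coreMul F G)) ∧
    -- unit laws
    (∀ E, D.IsCore E → D.coreMul (D.Theta (D.coreSrc E)) E = E ∧
      D.coreMul E (D.Theta (D.coreTgt E)) = E) ∧
    -- inverse laws
    (∀ E, D.IsCore E → D.IsCore (D.coreInv E) ∧
      D.coreSrc (D.coreInv E) = D.coreTgt E ∧
      D.coreTgt (D.coreInv E) = D.coreSrc E ∧
      D.coreMul E (D.coreInv E) = D.Theta (D.coreSrc E) ∧
      D.coreMul (D.coreInv E) E = D.Theta (D.coreTgt E)) := by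
  open DGpd in
  exact ⟨fun E F hE hF hEF =>
      ⟨isCore_coreMul hE hEF hF, coreSrc_coreMul hE hEF, coreTgt_coreMul hE hEF⟩,
    fun p => ⟨D.isCore_theta p, D.coreSrc_theta p, D.coreTgt_theta p⟩,
    fun E F G hE hF _ hEF hFG => coreMul_assoc hE hEF hF hFG,
    fun E hE => ⟨D.theta_coreMul E, coreMul_theta hE⟩,
    fun E hE => ⟨isCore_coreInv hE, coreSrc_coreInv hE, coreTgt_coreInv hE,
      coreMul_coreInv hE, coreInv_coreMul hE⟩⟩
end

section
/- The vertical and horizontal coboundary maps of the double complex of a double groupoid commute: for all r, s ≥ 0, d_V∘d_H = d_H∘d_V as maps D^{r,s} → D^{r+1,s+1}, where D^{r,s} consists of normalized K-valued functions on the set F^{(r,s)} of composable r×s matrices of boxes. -/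
/-- A bundle of abelian groups over `P`, presented with globally defined (partial in
spirit) operations: all group axioms are required fiberwise. -/
structure AbBundle (P : Type*) (K : Type*) where
  proj : K → P
  add : K → K → K
  zero : P → K
  neg : K → K
  proj_add : ∀ a b, proj a = proj b → proj (add a b) = proj a
  proj_zero : ∀ p, proj (zero p) = p
  proj_neg : ∀ a, proj (neg a) = proj a
  add_assoc : ∀ a b c, proj a = proj b → proj b = proj c →
    add (add a b) c = add a (add b c)
  add_comm : ∀ a b, proj a = proj b → add a b = add b a
  zero_add : ∀ a, add (zero (proj a)) a = a
  add_neg : ∀ a, add a (neg a) = zero (proj a)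

namespace AbBundle

variable {P K : Type*} (Kb : AbBundle P K)

/-- Subtraction in the bundle. -/
def sub (a b : K) : K := Kb.add a (Kb.neg b)

end AbBundle

/-- An action of a double groupoid `(B; V, H; P)` on an abelian group bundle
`K → P`: the groupoids `V` and `H` act by group bundle automorphisms, compatibly
via `l(A)⁻¹·(t(A)·k) = b(A)·(r(A)⁻¹·k)`; i.e. `K` is a module over the double
groupoid. -/
structure DAction {B V H P K : Type*} (D : DGpd B V H P) (Kb : AbBundle P K) where
  aV : V → K → K
  aH : H → K → K
  aV_proj : ∀ g k, Kb.proj k = D.eV g → Kb.proj (aV g k) = D.sV g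
  aV_id : ∀ k, aV (D.idV (Kb.proj k)) k = k
  aV_mul : ∀ g h k, D.eV g = D.sV h → Kb.proj k = D.eV h →
    aV (D.mulV g h) k = aV g (aV h k)
  aV_add : ∀ g k k', Kb.proj k = Kb.proj k' → Kb.proj k = D.eV g →
    aV g (Kb.add k k') = Kb.add (aV g k) (aV g k')
  aV_zero : ∀ g, aV g (Kb.zero (D.eV g)) = Kb.zero (D.sV g)
  aH_proj : ∀ x k, Kb.proj k = D.eH x → Kb.proj (aH x k) = D.sH x
  aH_id : ∀ k, aH (D.idH (Kb.proj k)) k = k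
  aH_mul : ∀ x y k, D.eH x = D.sH y → Kb.proj k = D.eH y →
    aH (D.mulH x y) k = aH x (aH y k)
  aH_add : ∀ x k k', Kb.proj k = Kb.proj k' → Kb.proj k = D.eH x →
    aH x (Kb.add k k') = Kb.add (aH x k) (aH x k')
  aH_zero : ∀ x, aH x (Kb.zero (D.eH x)) = Kb.zero (D.sH x)
  compat : ∀ A k, Kb.proj k = D.eH (D.t A) →
    aV (D.invV (D.l A)) (aH (D.t A) k) = aH (D.b A) (aV (D.invV (D.r A)) k)

section DComplex

variable {B V H P K : Type*} (D : DGpd B V H P) (Kb : AbBundle P K) (Ac : DAction D Kb)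

/-- Sign twist `(-1)^k · a` inside the bundle. -/
def sgn (k : ℕ) (a : K) : K := if k % 2 = 0 then a else Kb.neg a

/-- Sum of a list of elements of a fixed fiber of the bundle. -/
def mySum (p : P) (l : List K) : K := l.foldr Kb.add (Kb.zero p)

/-- Composability of a tuple `(x 0, …, x (s-1))` of horizontal arrows. -/
def HComp (s : ℕ) (x : ℕ → H) : Prop :=
  ∀ i, i + 1 < s → D.eH (x i) = D.sH (x (i + 1))

/-- Composability of a tuple `(g 0, …, g (r-1))` of vertical arrows. -/
def VComp (r : ℕ) (g : ℕ → V) : Prop :=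
  ∀ i, i + 1 < r → D.eV (g i) = D.sV (g (i + 1))

/-- Composability of an `r × s` matrix of boxes: `F^{(r,s)}`. -/
def BComp (r s : ℕ) (M : ℕ → ℕ → B) : Prop :=
  (∀ i j, i < r → j + 1 < s → D.r (M i j) = D.l (M i (j + 1))) ∧
  (∀ i j, i + 1 < r → j < s → D.b (M i j) = D.t (M (i + 1) j))

/-- Multiply the `k`-th and `(k+1)`-th entries of a tuple of horizontal arrows. -/
def mergeH (k : ℕ) (x : ℕ → H) : ℕ → H := fun j =>
  if j < k then x j else if j = k then D.mulH (x k) (x (k + 1)) else x (j + 1)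

/-- Multiply the `k`-th and `(k+1)`-th entries of a tuple of vertical arrows. -/
def mergeV (k : ℕ) (g : ℕ → V) : ℕ → V := fun j =>
  if j < k then g j else if j = k then D.mulV (g k) (g (k + 1)) else g (j + 1)

/-- Horizontally compose the `k`-th and `(k+1)`-th columns of a matrix of boxes. -/
def mergeCol (k : ℕ) (M : ℕ → ℕ → B) : ℕ → ℕ → B := fun i j =>
  if j < k then M i j else if j = k then D.hc (M i k) (M i (k + 1)) else M i (j + 1)

/-- Vertically compose the `k`-th and `(k+1)`-th rows of a matrix of boxes. -/
def mergeRow (k : ℕ) (M : ℕ → ℕ → B) : ℕ → ℕ → B := fun i j =>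
  if i < k then M i j else if i = k then D.vc (M k j) (M (k + 1) j) else M (i + 1) j

/-- `d_H^{0,0} : D^{0,0} → D^{0,1}`. -/
def dH00 (a : P → K) : (ℕ → H) → K := fun x =>
  Kb.sub (Ac.aH (x 0) (a (D.eH (x 0)))) (a (D.sH (x 0)))

/-- `d_V^{0,0} : D^{0,0} → D^{1,0}`. -/
def dV00 (a : P → K) : (ℕ → V) → K := fun g =>
  Kb.sub (a (D.eV (g 0))) (Ac.aV (D.invV (g 0)) (a (D.sV (g 0))))

/-- The bar differential `d_H^{0,m} : D^{0,m} → D^{0,m+1}` on `H`-cochains,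
twisted by the `H`-action in the first face. -/
def dHbar (m : ℕ) (a : (ℕ → H) → K) : (ℕ → H) → K := fun x =>
  mySum Kb (D.sH (x 0))
    ((Ac.aH (x 0) (a (fun i => x (i + 1)))) ::
      (List.ofFn (fun i : Fin m => sgn Kb (i.val + 1) (a (mergeH D i.val x))) ++
        [sgn Kb (m + 1) (a x)]))

/-- The bar differential `d_V^{m,0} : D^{m,0} → D^{m+1,0}` on `V`-cochains,
twisted by the `V`-action in the last face. -/
def dVbar (m : ℕ) (b : (ℕ → V) → K) : (ℕ → V) → K := fun g =>
  mySum Kb (D.eV (g m))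
    ((b (fun i => g (i + 1))) ::
      (List.ofFn (fun i : Fin m => sgn Kb (i.val + 1) (b (mergeV D i.val g))) ++
        [sgn Kb (m + 1) (Ac.aV (D.invV (g m)) (b g))]))

/-- `d_V^{0,s} : D^{0,s} → D^{1,s}` (s ≥ 1). -/
def dV0s (a : (ℕ → H) → K) : (ℕ → ℕ → B) → K := fun M =>
  Kb.sub (a (fun j => D.b (M 0 j)))
    (Ac.aV (D.invV (D.l (M 0 0))) (a (fun j => D.t (M 0 j))))

/-- `d_H^{r,0} : D^{r,0} → D^{r,1}` (r ≥ 1). -/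
def dHr0 (r : ℕ) (b : (ℕ → V) → K) : (ℕ → ℕ → B) → K := fun M =>
  Kb.sub (Ac.aH (D.b (M (r - 1) 0)) (b (fun i => D.r (M i 0))))
    (b (fun i => D.l (M i 0)))

/-- The interior horizontal differential `d_H^{r,s} : D^{r,s} → D^{r,s+1}`
(for `r, s ≥ 1`; the output is evaluated on `r × (s+1)` matrices). -/
def dHmat (r s : ℕ) (a : (ℕ → ℕ → B) → K) : (ℕ → ℕ → B) → K := fun M =>
  mySum Kb (D.eV (D.l (M (r - 1) 0)))
    ((Ac.aH (D.b (M (r - 1) 0)) (a (fun i j => M i (j + 1)))) ::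
      (List.ofFn (fun j : Fin s => sgn Kb (j.val + 1) (a (mergeCol D j.val M))) ++
        [sgn Kb (s + 1) (a M)]))

/-- The interior vertical differential `d_V^{r,s} : D^{r,s} → D^{r+1,s}`
(for `r, s ≥ 1`; the output is evaluated on `(r+1) × s` matrices). -/
def dVmat (r s : ℕ) (a : (ℕ → ℕ → B) → K) : (ℕ → ℕ → B) → K := fun M =>
  mySum Kb (D.eV (D.l (M r 0)))
    ((a (fun i j => M (i + 1) j)) ::
      (List.ofFn (fun i : Fin r => sgn Kb (i.val + 1) (a (mergeRow D i.val M))) ++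
        [sgn Kb (r + 1) (Ac.aV (D.invV (D.l (M r 0))) (a M))]))

end DComplex

/-!
Every fiber of `K` is an abelian group, and `k ↦ single k` embeds all fibers at once into the
abelian group `Section` of all sections `Π p, K_p`, additively on each fiber; the actions of `H`
and `V` extend to additive endomorphisms `hMap x`, `vMap g` of it. There every coboundary is the
alternating sum of the faces of its argument, the first horizontal face twisted by `hMap` and the
last vertical face by `vMap`. Expanding `d_V d_H` and `d_H d_V` then matches the terms pairwise:
merging two rows commutes with merging two columns by the interchange law; a face in one
direction keeps the edge carrying the twist of the other direction; the two double sums agree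
after exchanging the order of summation; and the two twisted corner terms agree by the
compatibility `l(A)⁻¹·(t(A)·k) = b(A)·(r(A)⁻¹·k)` for the bottom-left box `A`.
-/

namespace AbBundle

variable {P K : Type*} (Kb : AbBundle P K)

abbrev Fiber (p : P) : Type _ := {k : K // Kb.proj k = p}

variable {Kb}

theorem zero_add_of_proj {p : P} {a : K} (h : Kb.proj a = p) : Kb.add (Kb.zero p) a = a := by
  subst h; exact Kb.zero_add a

instance (p : P) : Add (Kb.Fiber p) :=
  ⟨fun a b => ⟨Kb.add a.1 b.1, (Kb.proj_add _ _ (a.2.trans b.2.symm)).trans a.2⟩⟩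

instance (p : P) : Zero (Kb.Fiber p) := ⟨⟨Kb.zero p, Kb.proj_zero p⟩⟩

instance (p : P) : Neg (Kb.Fiber p) := ⟨fun a => ⟨Kb.neg a.1, (Kb.proj_neg a.1).trans a.2⟩⟩

instance (p : P) : AddCommGroup (Kb.Fiber p) where
  add_assoc a b c := Subtype.ext <| Kb.add_assoc _ _ _ (a.2.trans b.2.symm) (b.2.trans c.2.symm)
  zero_add a := Subtype.ext <| zero_add_of_proj a.2
  add_zero a := Subtype.ext <|
    (Kb.add_comm _ _ (a.2.trans (Kb.proj_zero p).symm)).trans (zero_add_of_proj a.2)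
  add_comm a b := Subtype.ext <| Kb.add_comm _ _ (a.2.trans b.2.symm)
  neg_add_cancel a := Subtype.ext <|
    (Kb.add_comm _ _ (Kb.proj_neg a.1)).trans ((Kb.add_neg a.1).trans (congrArg Kb.zero a.2))
  nsmul := nsmulRec
  zsmul := zsmulRec

abbrev Section : Type _ := (p : P) → Kb.Fiber p

variable (Kb) in
open Classical in
noncomputable def single (k : K) : Kb.Section :=
  Pi.single (Kb.proj k) (⟨k, rfl⟩ : Kb.Fiber (Kb.proj k))

open Classical in
theorem single_eq {k : K} {p : P} (h : Kb.proj k = p) :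
    Kb.single k = Pi.single p (⟨k, h⟩ : Kb.Fiber p) := by
  subst h; rfl

theorem single_add {a b : K} (h : Kb.proj a = Kb.proj b) :
    Kb.single (Kb.add a b) = Kb.single a + Kb.single b := by
  classical
  rw [single_eq (Kb.proj_add a b h), single_eq rfl, single_eq h.symm, ← Pi.single_add]
  rfl

theorem single_zero (p : P) : Kb.single (Kb.zero p) = 0 := by
  classical
  rw [single_eq (Kb.proj_zero p)]
  exact Pi.single_zero p

theorem single_neg (a : K) : Kb.single (Kb.neg a) = -Kb.single a := by
  classical
  rw [single_eq (Kb.proj_neg a), single_eq rfl, ← Pi.single_neg]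
  rfl

theorem single_sub {a b : K} (h : Kb.proj a = Kb.proj b) :
    Kb.single (Kb.sub a b) = Kb.single a - Kb.single b := by
  rw [sub, single_add (h.trans (Kb.proj_neg b).symm), single_neg, sub_eq_add_neg]

theorem single_sgn (k : ℕ) (a : K) : Kb.single (sgn Kb k a) = (-1 : ℤ) ^ k • Kb.single a := by
  unfold sgn
  split_ifs with hk
  · rw [(Nat.even_iff.mpr hk).neg_one_pow, one_smul]
  · rw [(Nat.odd_iff.mpr (by omega)).neg_one_pow, neg_one_smul, single_neg]

theorem proj_sgn (k : ℕ) (a : K) : Kb.proj (sgn Kb k a) = Kb.proj a := by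
  unfold sgn
  split_ifs
  · rfl
  · exact Kb.proj_neg a

theorem proj_sub {a b : K} (h : Kb.proj a = Kb.proj b) : Kb.proj (Kb.sub a b) = Kb.proj a :=
  Kb.proj_add _ _ (h.trans (Kb.proj_neg b).symm)

theorem eq_of_single_eq {a b : K} (h : Kb.proj a = Kb.proj b)
    (hs : Kb.single a = Kb.single b) : a = b := by
  classical
  rw [single_eq rfl, single_eq h.symm] at hs
  exact congrArg Subtype.val (Pi.single_injective (M := Kb.Fiber) _ hs)

theorem proj_mySum {p : P} {l : List K} (hl : ∀ k ∈ l, Kb.proj k = p) :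
    Kb.proj (mySum Kb p l) = p := by
  induction l with
  | nil => exact Kb.proj_zero p
  | cons a l ih =>
    have ha := hl a List.mem_cons_self
    have hl' := ih fun k hk => hl k (List.mem_cons_of_mem a hk)
    exact (Kb.proj_add _ _ (ha.trans hl'.symm)).trans ha

theorem single_mySum {p : P} {l : List K} (hl : ∀ k ∈ l, Kb.proj k = p) :
    Kb.single (mySum Kb p l) = (l.map Kb.single).sum := by
  induction l with
  | nil => exact single_zero p
  | cons a l ih =>
    have hl' : ∀ k ∈ l, Kb.proj k = p := fun k hk => hl k (List.mem_cons_of_mem a hk)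
    rw [List.map_cons, List.sum_cons, ← ih hl']
    exact single_add ((hl a List.mem_cons_self).trans (proj_mySum hl').symm)

theorem proj_of_mem_faces {n : ℕ} {p : P} {h0 hl : K} {f : Fin n → K}
    (h0p : Kb.proj h0 = p) (hf : ∀ i, Kb.proj (f i) = p) (hlp : Kb.proj hl = p) :
    ∀ k ∈ h0 :: (List.ofFn (fun i : Fin n => sgn Kb (i.val + 1) (f i)) ++ [sgn Kb (n + 1) hl]),
      Kb.proj k = p := by
  simp only [List.mem_cons, List.mem_append, List.mem_ofFn]
  rintro k (rfl | ⟨i, rfl⟩ | rfl | h)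
  · exact h0p
  · rw [proj_sgn, hf]
  · rw [proj_sgn, hlp]
  · simp at h

theorem proj_faceSum {n : ℕ} {p : P} {h0 hl : K} {f : Fin n → K}
    (h0p : Kb.proj h0 = p) (hf : ∀ i, Kb.proj (f i) = p) (hlp : Kb.proj hl = p) :
    Kb.proj (mySum Kb p (h0 ::
      (List.ofFn (fun i : Fin n => sgn Kb (i.val + 1) (f i)) ++ [sgn Kb (n + 1) hl]))) = p :=
  proj_mySum (proj_of_mem_faces h0p hf hlp)

theorem single_faceSum {n : ℕ} {p : P} {h0 hl : K} {f : Fin n → K}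
    (h0p : Kb.proj h0 = p) (hf : ∀ i, Kb.proj (f i) = p) (hlp : Kb.proj hl = p) :
    Kb.single (mySum Kb p (h0 ::
      (List.ofFn (fun i : Fin n => sgn Kb (i.val + 1) (f i)) ++ [sgn Kb (n + 1) hl]))) =
      Kb.single h0 + ∑ i, (-1 : ℤ) ^ (i.val + 1) • Kb.single (f i) +
        (-1 : ℤ) ^ (n + 1) • Kb.single hl := by
  rw [single_mySum (proj_of_mem_faces h0p hf hlp)]
  simp only [List.map_cons, List.map_append, List.map_ofFn, List.map_nil, List.sum_cons,
    List.sum_append, List.sum_ofFn, List.sum_nil, Function.comp_apply, single_sgn, add_zero]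
  abel

variable (Kb) in
open Classical in
noncomputable def fiberMap (e s : P) (φ : K → K)
    (hproj : ∀ k, Kb.proj k = e → Kb.proj (φ k) = s)
    (hadd : ∀ k k', Kb.proj k = Kb.proj k' → Kb.proj k = e →
      φ (Kb.add k k') = Kb.add (φ k) (φ k'))
    (hzero : φ (Kb.zero e) = Kb.zero s) : Kb.Section →+ Kb.Section :=
  (AddMonoidHom.single _ s).comp <|
    ({ toFun := fun k => ⟨φ k.1, hproj _ k.2⟩
       map_zero' := Subtype.ext hzero
       map_add' := fun k k' => Subtype.ext (hadd _ _ (k.2.trans k'.2.symm) k.2) } :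
        Kb.Fiber e →+ Kb.Fiber s).comp (Pi.evalAddMonoidHom _ e)

theorem single_fiberMap {e s : P} {φ : K → K} {hproj hadd hzero} {k : K} (h : Kb.proj k = e) :
    Kb.single (φ k) = Kb.fiberMap e s φ hproj hadd hzero (Kb.single k) := by
  classical
  rw [single_eq (hproj k h), single_eq h]
  simp only [fiberMap, AddMonoidHom.coe_comp, Function.comp_apply, Pi.evalAddMonoidHom_apply,
    Pi.single_eq_same, AddMonoidHom.single_apply, AddMonoidHom.coe_mk, ZeroHom.coe_mk]

end AbBundle

namespace DAction

variable {B V H P K : Type*} {D : DGpd B V H P} {Kb : AbBundle P K} (Ac : DAction D Kb)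

noncomputable def hMap (x : H) : Kb.Section →+ Kb.Section :=
  Kb.fiberMap (D.eH x) (D.sH x) (Ac.aH x) (Ac.aH_proj x) (Ac.aH_add x) (Ac.aH_zero x)

noncomputable def vMap (g : V) : Kb.Section →+ Kb.Section :=
  Kb.fiberMap (D.eV g) (D.sV g) (Ac.aV g) (Ac.aV_proj g) (Ac.aV_add g) (Ac.aV_zero g)

variable {Ac}

theorem single_aH {x : H} {k : K} (h : Kb.proj k = D.eH x) :
    Kb.single (Ac.aH x k) = Ac.hMap x (Kb.single k) :=
  AbBundle.single_fiberMap h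

theorem single_aV {g : V} {k : K} (h : Kb.proj k = D.eV g) :
    Kb.single (Ac.aV g k) = Ac.vMap g (Kb.single k) :=
  AbBundle.single_fiberMap h

theorem vMap_hMap_single (A : B) {k : K} (hk : Kb.proj k = D.eH (D.t A)) :
    Ac.vMap (D.invV (D.l A)) (Ac.hMap (D.t A) (Kb.single k)) =
      Ac.hMap (D.b A) (Ac.vMap (D.invV (D.r A)) (Kb.single k)) := by
  have h1 : Kb.proj (Ac.aH (D.t A) k) = D.eV (D.invV (D.l A)) :=
    (Ac.aH_proj _ _ hk).trans ((D.corner_tl A).trans (D.eV_inv _).symm)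
  have h2 : Kb.proj k = D.eV (D.invV (D.r A)) :=
    hk.trans ((D.corner_tr A).trans (D.eV_inv _).symm)
  have h3 : Kb.proj (Ac.aV (D.invV (D.r A)) k) = D.eH (D.b A) :=
    (Ac.aV_proj _ _ h2).trans ((D.sV_inv _).trans (D.corner_br A).symm)
  rw [← single_aH hk, ← single_aV h1, ← single_aV h2, ← single_aH h3, Ac.compat A k hk]

end DAction

section Merge

variable {B V H P : Type*} {D : DGpd B V H P}

theorem mergeH_of_lt {k j : ℕ} {x : ℕ → H} (hj : j < k) : mergeH D k x j = x j := if_pos hj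

theorem mergeH_self {k : ℕ} {x : ℕ → H} : mergeH D k x k = D.mulH (x k) (x (k + 1)) := by
  simp [mergeH]

theorem mergeH_of_gt {k j : ℕ} {x : ℕ → H} (hj : k < j) : mergeH D k x j = x (j + 1) := by
  simp [mergeH, Nat.not_lt_of_gt hj, hj.ne']

theorem mergeV_of_lt {k j : ℕ} {g : ℕ → V} (hj : j < k) : mergeV D k g j = g j := if_pos hj

theorem mergeV_self {k : ℕ} {g : ℕ → V} : mergeV D k g k = D.mulV (g k) (g (k + 1)) := by
  simp [mergeV]

theorem mergeV_of_gt {k j : ℕ} {g : ℕ → V} (hj : k < j) : mergeV D k g j = g (j + 1) := by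
  simp [mergeV, Nat.not_lt_of_gt hj, hj.ne']

theorem mergeCol_of_lt {k i j : ℕ} {M : ℕ → ℕ → B} (hj : j < k) :
    mergeCol D k M i j = M i j := if_pos hj

theorem mergeCol_self {k i : ℕ} {M : ℕ → ℕ → B} :
    mergeCol D k M i k = D.hc (M i k) (M i (k + 1)) := by
  simp [mergeCol]

theorem mergeCol_of_gt {k i j : ℕ} {M : ℕ → ℕ → B} (hj : k < j) :
    mergeCol D k M i j = M i (j + 1) := by
  simp [mergeCol, Nat.not_lt_of_gt hj, hj.ne']

theorem mergeRow_of_lt {k i j : ℕ} {M : ℕ → ℕ → B} (hi : i < k) :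
    mergeRow D k M i j = M i j := if_pos hi

theorem mergeRow_self {k j : ℕ} {M : ℕ → ℕ → B} :
    mergeRow D k M k j = D.vc (M k j) (M (k + 1) j) := by
  simp [mergeRow]

theorem mergeRow_of_gt {k i j : ℕ} {M : ℕ → ℕ → B} (hi : k < i) :
    mergeRow D k M i j = M (i + 1) j := by
  simp [mergeRow, Nat.not_lt_of_gt hi, hi.ne']

theorem mergeCol_dropRow (j : ℕ) (M : ℕ → ℕ → B) :
    mergeCol D j (fun i k => M (i + 1) k) = fun i k => mergeCol D j M (i + 1) k := rfl

theorem mergeRow_dropCol (i : ℕ) (M : ℕ → ℕ → B) :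
    mergeRow D i (fun k j => M k (j + 1)) = fun k j => mergeRow D i M k (j + 1) := rfl

theorem sH_mergeH_zero {k : ℕ} {x : ℕ → H} (h : D.eH (x 0) = D.sH (x 1)) :
    D.sH (mergeH D k x 0) = D.sH (x 0) := by
  cases k with
  | zero => rw [mergeH_self]; exact D.sH_mul _ _ h
  | succ m => rw [mergeH_of_lt (Nat.succ_pos m)]

theorem eV_mergeV_last {n k : ℕ} {g : ℕ → V} (hk : k ≤ n)
    (h : D.eV (g n) = D.sV (g (n + 1))) :
    D.eV (mergeV D k g n) = D.eV (g (n + 1)) := by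
  rcases hk.lt_or_eq with hk | rfl
  · rw [mergeV_of_gt hk]
  · rw [mergeV_self]; exact D.eV_mul _ _ h

theorem l_mergeCol_zero {k i : ℕ} {M : ℕ → ℕ → B} (h : D.r (M i 0) = D.l (M i 1)) :
    D.l (mergeCol D k M i 0) = D.l (M i 0) := by
  cases k with
  | zero => rw [mergeCol_self, D.hc_l _ _ h]
  | succ m => rw [mergeCol_of_lt (Nat.succ_pos m)]

theorem b_mergeRow_last {k n : ℕ} {M : ℕ → ℕ → B} (hk : k ≤ n)
    (h : D.b (M n 0) = D.t (M (n + 1) 0)) :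
    D.b (mergeRow D k M n 0) = D.b (M (n + 1) 0) := by
  rcases hk.lt_or_eq with hk | rfl
  · rw [mergeRow_of_gt hk]
  · rw [mergeRow_self, D.vc_b _ _ h]

theorem eV_l_mergeRow_last {k n : ℕ} {M : ℕ → ℕ → B} (hk : k ≤ n)
    (h : D.b (M n 0) = D.t (M (n + 1) 0)) :
    D.eV (D.l (mergeRow D k M n 0)) = D.eV (D.l (M (n + 1) 0)) := by
  rcases hk.lt_or_eq with hk | rfl
  · rw [mergeRow_of_gt hk]
  · rw [mergeRow_self, D.vc_l _ _ h]
    exact D.eV_mul _ _ (by rw [← D.corner_bl, ← D.corner_tl, h])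

theorem mergeCol_bottom {k i : ℕ} {M : ℕ → ℕ → B} (h : D.r (M i k) = D.l (M i (k + 1))) :
    (fun j => D.b (mergeCol D k M i j)) = mergeH D k (fun j => D.b (M i j)) := by
  funext j
  rcases Nat.lt_trichotomy j k with hj | rfl | hj
  · rw [mergeCol_of_lt hj, mergeH_of_lt hj]
  · rw [mergeCol_self, mergeH_self, D.hc_b _ _ h]
  · rw [mergeCol_of_gt hj, mergeH_of_gt hj]

theorem mergeCol_top {k i : ℕ} {M : ℕ → ℕ → B} (h : D.r (M i k) = D.l (M i (k + 1))) :
    (fun j => D.t (mergeCol D k M i j)) = mergeH D k (fun j => D.t (M i j)) := by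
  funext j
  rcases Nat.lt_trichotomy j k with hj | rfl | hj
  · rw [mergeCol_of_lt hj, mergeH_of_lt hj]
  · rw [mergeCol_self, mergeH_self, D.hc_t _ _ h]
  · rw [mergeCol_of_gt hj, mergeH_of_gt hj]

theorem mergeRow_right {k j : ℕ} {M : ℕ → ℕ → B} (h : D.b (M k j) = D.t (M (k + 1) j)) :
    (fun i => D.r (mergeRow D k M i j)) = mergeV D k (fun i => D.r (M i j)) := by
  funext i
  rcases Nat.lt_trichotomy i k with hi | rfl | hi
  · rw [mergeRow_of_lt hi, mergeV_of_lt hi]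
  · rw [mergeRow_self, mergeV_self, D.vc_r _ _ h]
  · rw [mergeRow_of_gt hi, mergeV_of_gt hi]

theorem mergeRow_left {k j : ℕ} {M : ℕ → ℕ → B} (h : D.b (M k j) = D.t (M (k + 1) j)) :
    (fun i => D.l (mergeRow D k M i j)) = mergeV D k (fun i => D.l (M i j)) := by
  funext i
  rcases Nat.lt_trichotomy i k with hi | rfl | hi
  · rw [mergeRow_of_lt hi, mergeV_of_lt hi]
  · rw [mergeRow_self, mergeV_self, D.vc_l _ _ h]
  · rw [mergeRow_of_gt hi, mergeV_of_gt hi]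

end Merge

section Composable

variable {B V H P : Type*} {D : DGpd B V H P}

theorem HComp.mono {n m : ℕ} {x : ℕ → H} (h : HComp D n x) (hm : m ≤ n) : HComp D m x :=
  fun i hi => h i (by omega)

theorem VComp.mono {n m : ℕ} {g : ℕ → V} (h : VComp D n g) (hm : m ≤ n) : VComp D m g :=
  fun i hi => h i (by omega)

theorem HComp.tail {n : ℕ} {x : ℕ → H} (h : HComp D (n + 1) x) :
    HComp D n (fun i => x (i + 1)) := fun i hi => h (i + 1) (by omega)

theorem VComp.tail {n : ℕ} {g : ℕ → V} (h : VComp D (n + 1) g) :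
    VComp D n (fun i => g (i + 1)) := fun i hi => h (i + 1) (by omega)

theorem HComp.mergeH {n k : ℕ} {x : ℕ → H} (h : HComp D (n + 1) x) (hk : k < n) :
    HComp D n (mergeH D k x) := by
  intro i hi
  rcases Nat.lt_trichotomy (i + 1) k with h1 | h1 | h1
  · rw [mergeH_of_lt (by omega), mergeH_of_lt h1]; exact h i (by omega)
  · rw [mergeH_of_lt (by omega), h1, mergeH_self, D.sH_mul _ _ (h k (by omega)), ← h1]
    exact h i (by omega)
  · rcases Nat.lt_or_ge k i with h2 | h2
    · rw [mergeH_of_gt h2, mergeH_of_gt (by omega)]; exact h (i + 1) (by omega)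
    · obtain rfl : i = k := by omega
      rw [mergeH_self, mergeH_of_gt (by omega), D.eH_mul _ _ (h i (by omega))]
      exact h (i + 1) (by omega)

theorem VComp.mergeV {n k : ℕ} {g : ℕ → V} (h : VComp D (n + 1) g) (hk : k < n) :
    VComp D n (mergeV D k g) := by
  intro i hi
  rcases Nat.lt_trichotomy (i + 1) k with h1 | h1 | h1
  · rw [mergeV_of_lt (by omega), mergeV_of_lt h1]; exact h i (by omega)
  · rw [mergeV_of_lt (by omega), h1, mergeV_self, D.sV_mul _ _ (h k (by omega)), ← h1]
    exact h i (by omega)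
  · rcases Nat.lt_or_ge k i with h2 | h2
    · rw [mergeV_of_gt h2, mergeV_of_gt (by omega)]; exact h (i + 1) (by omega)
    · obtain rfl : i = k := by omega
      rw [mergeV_self, mergeV_of_gt (by omega), D.eV_mul _ _ (h i (by omega))]
      exact h (i + 1) (by omega)

theorem BComp.mono {r s r' s' : ℕ} {M : ℕ → ℕ → B} (h : BComp D r s M)
    (hr : r' ≤ r) (hs : s' ≤ s) : BComp D r' s' M :=
  ⟨fun i j hi hj => h.1 i j (by omega) (by omega),
    fun i j hi hj => h.2 i j (by omega) (by omega)⟩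

theorem BComp.dropRow {r s : ℕ} {M : ℕ → ℕ → B} (h : BComp D (r + 1) s M) :
    BComp D r s (fun i j => M (i + 1) j) :=
  ⟨fun i j hi hj => h.1 (i + 1) j (by omega) hj, fun i j hi hj => h.2 (i + 1) j (by omega) hj⟩

theorem BComp.dropCol {r s : ℕ} {M : ℕ → ℕ → B} (h : BComp D r (s + 1) M) :
    BComp D r s (fun i j => M i (j + 1)) :=
  ⟨fun i j hi hj => h.1 i (j + 1) hi (by omega), fun i j hi hj => h.2 i (j + 1) hi (by omega)⟩

theorem BComp.hComp_bottom {s : ℕ} {M : ℕ → ℕ → B} (h : BComp D 1 s M) :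
    HComp D s (fun j => D.b (M 0 j)) := fun j hj => by
  rw [D.corner_br, D.corner_bl, h.1 0 j Nat.one_pos hj]

theorem BComp.hComp_top {s : ℕ} {M : ℕ → ℕ → B} (h : BComp D 1 s M) :
    HComp D s (fun j => D.t (M 0 j)) := fun j hj => by
  rw [D.corner_tr, D.corner_tl, h.1 0 j Nat.one_pos hj]

theorem BComp.vComp_right {r : ℕ} {M : ℕ → ℕ → B} (h : BComp D r 1 M) :
    VComp D r (fun i => D.r (M i 0)) := fun i hi => by
  rw [← D.corner_br, ← D.corner_tr, h.2 i 0 hi Nat.one_pos]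

theorem BComp.vComp_left {r : ℕ} {M : ℕ → ℕ → B} (h : BComp D r 1 M) :
    VComp D r (fun i => D.l (M i 0)) := fun i hi => by
  rw [← D.corner_bl, ← D.corner_tl, h.2 i 0 hi Nat.one_pos]

theorem BComp.mergeCol {r s k : ℕ} {M : ℕ → ℕ → B} (h : BComp D r (s + 1) M)
    (hk : k < s) :
    BComp D r s (mergeCol D k M) := by
  constructor
  · intro i j hi hj
    rcases Nat.lt_trichotomy (j + 1) k with h1 | h1 | h1
    · rw [mergeCol_of_lt (by omega), mergeCol_of_lt h1]
      exact h.1 i j hi (by omega)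
    · rw [mergeCol_of_lt (by omega), h1, mergeCol_self, D.hc_l _ _ (h.1 i k hi (by omega)), ← h1]
      exact h.1 i j hi (by omega)
    · rcases Nat.lt_or_ge k j with h2 | h2
      · rw [mergeCol_of_gt h2, mergeCol_of_gt (by omega)]
        exact h.1 i (j + 1) hi (by omega)
      · obtain rfl : j = k := by omega
        rw [mergeCol_self, mergeCol_of_gt (by omega), D.hc_r _ _ (h.1 i j hi (by omega))]
        exact h.1 i (j + 1) hi (by omega)
  · intro i j hi hj
    rcases Nat.lt_trichotomy j k with h1 | rfl | h1
    · rw [mergeCol_of_lt h1, mergeCol_of_lt h1]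
      exact h.2 i j hi (by omega)
    · rw [mergeCol_self, mergeCol_self, D.hc_b _ _ (h.1 i j (by omega) (by omega)),
        D.hc_t _ _ (h.1 (i + 1) j hi (by omega)), h.2 i j hi (by omega),
        h.2 i (j + 1) hi (by omega)]
    · rw [mergeCol_of_gt h1, mergeCol_of_gt h1]
      exact h.2 i (j + 1) hi (by omega)

theorem BComp.mergeRow {r s k : ℕ} {M : ℕ → ℕ → B} (h : BComp D (r + 1) s M)
    (hk : k < r) :
    BComp D r s (mergeRow D k M) := by
  constructor
  · intro i j hi hj
    rcases Nat.lt_trichotomy i k with h1 | rfl | h1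
    · rw [mergeRow_of_lt h1, mergeRow_of_lt h1]
      exact h.1 i j (by omega) hj
    · rw [mergeRow_self, mergeRow_self, D.vc_r _ _ (h.2 i j (by omega) (by omega)),
        D.vc_l _ _ (h.2 i (j + 1) (by omega) hj), h.1 i j (by omega) hj,
        h.1 (i + 1) j (by omega) hj]
    · rw [mergeRow_of_gt h1, mergeRow_of_gt h1]
      exact h.1 (i + 1) j (by omega) hj
  · intro i j hi hj
    rcases Nat.lt_trichotomy (i + 1) k with h1 | h1 | h1
    · rw [mergeRow_of_lt (by omega), mergeRow_of_lt h1]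
      exact h.2 i j (by omega) hj
    · rw [mergeRow_of_lt (by omega), h1, mergeRow_self, D.vc_t _ _ (h.2 k j (by omega) hj), ← h1]
      exact h.2 i j (by omega) hj
    · rcases Nat.lt_or_ge k i with h2 | h2
      · rw [mergeRow_of_gt h2, mergeRow_of_gt (by omega)]
        exact h.2 (i + 1) j (by omega) hj
      · obtain rfl : i = k := by omega
        rw [mergeRow_self, mergeRow_of_gt (by omega), D.vc_b _ _ (h.2 i j (by omega) hj)]
        exact h.2 (i + 1) j (by omega) hj

theorem mergeRow_mergeCol {r s i j : ℕ} {M : ℕ → ℕ → B} (h : BComp D (r + 1) (s + 1) M)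
    (hi : i < r) (hj : j < s) :
    mergeRow D i (mergeCol D j M) = mergeCol D j (mergeRow D i M) := by
  funext a c
  rcases Nat.lt_trichotomy a i with ha | rfl | ha
  · rcases Nat.lt_trichotomy c j with hc | rfl | hc
    · rw [mergeRow_of_lt ha, mergeCol_of_lt hc, mergeCol_of_lt hc, mergeRow_of_lt ha]
    · rw [mergeRow_of_lt ha, mergeCol_self, mergeCol_self, mergeRow_of_lt ha, mergeRow_of_lt ha]
    · rw [mergeRow_of_lt ha, mergeCol_of_gt hc, mergeCol_of_gt hc, mergeRow_of_lt ha]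
  · rcases Nat.lt_trichotomy c j with hc | rfl | hc
    · rw [mergeRow_self, mergeCol_of_lt hc, mergeCol_of_lt hc, mergeCol_of_lt hc, mergeRow_self]
    · rw [mergeRow_self, mergeCol_self, mergeCol_self, mergeCol_self, mergeRow_self,
        mergeRow_self]
      exact D.interchange _ _ _ _ (h.1 a c (by omega) (by omega))
        (h.1 (a + 1) c (by omega) (by omega)) (h.2 a c (by omega) (by omega))
        (h.2 a (c + 1) (by omega) (by omega))
    · rw [mergeRow_self, mergeCol_of_gt hc, mergeCol_of_gt hc, mergeCol_of_gt hc, mergeRow_self]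
  · rcases Nat.lt_trichotomy c j with hc | rfl | hc
    · rw [mergeRow_of_gt ha, mergeCol_of_lt hc, mergeCol_of_lt hc, mergeRow_of_gt ha]
    · rw [mergeRow_of_gt ha, mergeCol_self, mergeCol_self, mergeRow_of_gt ha, mergeRow_of_gt ha]
    · rw [mergeRow_of_gt ha, mergeCol_of_gt hc, mergeCol_of_gt hc, mergeRow_of_gt ha]

end Composable

section Differentials

open AbBundle DAction

variable {B V H P K : Type*} {D : DGpd B V H P} {Kb : AbBundle P K} (Ac : DAction D Kb)

theorem dH00_spec {a : P → K} (ha : ∀ p, Kb.proj (a p) = p) (x : ℕ → H) :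
    Kb.proj (dH00 D Kb Ac a x) = D.sH (x 0) ∧
      Kb.single (dH00 D Kb Ac a x) =
        Ac.hMap (x 0) (Kb.single (a (D.eH (x 0)))) - Kb.single (a (D.sH (x 0))) := by
  have hA : Kb.proj (Ac.aH (x 0) (a (D.eH (x 0)))) = Kb.proj (a (D.sH (x 0))) :=
    (Ac.aH_proj _ _ (ha _)).trans (ha _).symm
  exact ⟨(proj_sub hA).trans (Ac.aH_proj _ _ (ha _)),
    by rw [dH00, single_sub hA, single_aH (ha _)]⟩

theorem dV00_spec {a : P → K} (ha : ∀ p, Kb.proj (a p) = p) (g : ℕ → V) :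
    Kb.proj (dV00 D Kb Ac a g) = D.eV (g 0) ∧
      Kb.single (dV00 D Kb Ac a g) =
        Kb.single (a (D.eV (g 0))) - Ac.vMap (D.invV (g 0)) (Kb.single (a (D.sV (g 0)))) := by
  have hs : Kb.proj (a (D.sV (g 0))) = D.eV (D.invV (g 0)) := (ha _).trans (D.eV_inv _).symm
  have hv : Kb.proj (a (D.eV (g 0))) = Kb.proj (Ac.aV (D.invV (g 0)) (a (D.sV (g 0)))) :=
    (ha _).trans ((Ac.aV_proj _ _ hs).trans (D.sV_inv _)).symm
  exact ⟨(proj_sub hv).trans (ha _), by rw [dV00, single_sub hv, single_aV hs]⟩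

theorem dV0s_spec {s : ℕ} {a : (ℕ → H) → K}
    (ha : ∀ x, HComp D s x → Kb.proj (a x) = D.sH (x 0))
    {M : ℕ → ℕ → B} (hM : BComp D 1 s M) :
    Kb.proj (dV0s D Kb Ac a M) = D.eV (D.l (M 0 0)) ∧
      Kb.single (dV0s D Kb Ac a M) = Kb.single (a fun j => D.b (M 0 j)) -
        Ac.vMap (D.invV (D.l (M 0 0))) (Kb.single (a fun j => D.t (M 0 j))) := by
  have hb : Kb.proj (a fun j => D.b (M 0 j)) = D.eV (D.l (M 0 0)) :=
    (ha _ hM.hComp_bottom).trans (D.corner_bl _)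
  have ht : Kb.proj (a fun j => D.t (M 0 j)) = D.eV (D.invV (D.l (M 0 0))) :=
    (ha _ hM.hComp_top).trans ((D.corner_tl _).trans (D.eV_inv _).symm)
  have hv : Kb.proj (a fun j => D.b (M 0 j)) =
      Kb.proj (Ac.aV (D.invV (D.l (M 0 0))) (a fun j => D.t (M 0 j))) :=
    hb.trans ((Ac.aV_proj _ _ ht).trans (D.sV_inv _)).symm
  exact ⟨(proj_sub hv).trans hb, by rw [dV0s, single_sub hv, single_aV ht]⟩

theorem dHr0_spec {r : ℕ} {c : (ℕ → V) → K}
    (hc : ∀ g, VComp D (r + 1) g → Kb.proj (c g) = D.eV (g r))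
    {M : ℕ → ℕ → B} (hM : BComp D (r + 1) 1 M) :
    Kb.proj (dHr0 D Kb Ac (r + 1) c M) = D.eV (D.l (M r 0)) ∧
      Kb.single (dHr0 D Kb Ac (r + 1) c M) =
        Ac.hMap (D.b (M r 0)) (Kb.single (c fun i => D.r (M i 0))) -
          Kb.single (c fun i => D.l (M i 0)) := by
  have hr : Kb.proj (c fun i => D.r (M i 0)) = D.eH (D.b (M r 0)) :=
    (hc _ hM.vComp_right).trans (D.corner_br _).symm
  have hl : Kb.proj (c fun i => D.l (M i 0)) = D.eV (D.l (M r 0)) := hc _ hM.vComp_left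
  have hh : Kb.proj (Ac.aH (D.b (M r 0)) (c fun i => D.r (M i 0))) =
      Kb.proj (c fun i => D.l (M i 0)) :=
    ((Ac.aH_proj _ _ hr).trans (D.corner_bl _)).trans hl.symm
  simp only [dHr0, Nat.add_sub_cancel]
  exact ⟨(proj_sub hh).trans (hh.trans hl), by rw [single_sub hh, single_aH hr]⟩

theorem dHbar_spec {s : ℕ} {a : (ℕ → H) → K}
    (ha : ∀ x, HComp D (s + 1) x → Kb.proj (a x) = D.sH (x 0))
    {x : ℕ → H} (hx : HComp D (s + 2) x) :
    Kb.proj (dHbar D Kb Ac (s + 1) a x) = D.sH (x 0) ∧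
      Kb.single (dHbar D Kb Ac (s + 1) a x) =
        Ac.hMap (x 0) (Kb.single (a fun i => x (i + 1))) +
          ∑ i : Fin (s + 1), (-1 : ℤ) ^ (i.val + 1) • Kb.single (a (mergeH D i x)) +
          (-1 : ℤ) ^ (s + 1 + 1) • Kb.single (a x) := by
  have h0 : Kb.proj (a fun i => x (i + 1)) = D.eH (x 0) :=
    (ha _ hx.tail).trans (hx 0 (by omega)).symm
  have hA : Kb.proj (Ac.aH (x 0) (a fun i => x (i + 1))) = D.sH (x 0) := Ac.aH_proj _ _ h0
  have hf : ∀ i : Fin (s + 1), Kb.proj (a (mergeH D i x)) = D.sH (x 0) := fun i =>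
    (ha _ (hx.mergeH i.2)).trans (sH_mergeH_zero (hx 0 (by omega)))
  have hl : Kb.proj (a x) = D.sH (x 0) := ha _ (hx.mono (by omega))
  exact ⟨proj_faceSum hA hf hl, by rw [dHbar, single_faceSum hA hf hl, single_aH h0]⟩

theorem dVbar_spec {r : ℕ} {c : (ℕ → V) → K}
    (hc : ∀ g, VComp D (r + 1) g → Kb.proj (c g) = D.eV (g r))
    {g : ℕ → V} (hg : VComp D (r + 2) g) :
    Kb.proj (dVbar D Kb Ac (r + 1) c g) = D.eV (g (r + 1)) ∧
      Kb.single (dVbar D Kb Ac (r + 1) c g) =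
        Kb.single (c fun i => g (i + 1)) +
          ∑ i : Fin (r + 1), (-1 : ℤ) ^ (i.val + 1) • Kb.single (c (mergeV D i g)) +
          (-1 : ℤ) ^ (r + 1 + 1) • Ac.vMap (D.invV (g (r + 1))) (Kb.single (c g)) := by
  have h0 : Kb.proj (c fun i => g (i + 1)) = D.eV (g (r + 1)) := hc _ hg.tail
  have hf : ∀ i : Fin (r + 1), Kb.proj (c (mergeV D i g)) = D.eV (g (r + 1)) := fun i =>
    (hc _ (hg.mergeV i.2)).trans (eV_mergeV_last (Nat.lt_succ_iff.mp i.2) (hg r (by omega)))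
  have hcg : Kb.proj (c g) = D.eV (D.invV (g (r + 1))) :=
    (hc _ (hg.mono (by omega))).trans ((hg r (by omega)).trans (D.eV_inv _).symm)
  have hl : Kb.proj (Ac.aV (D.invV (g (r + 1))) (c g)) = D.eV (g (r + 1)) :=
    (Ac.aV_proj _ _ hcg).trans (D.sV_inv _)
  exact ⟨proj_faceSum h0 hf hl, by rw [dVbar, single_faceSum h0 hf hl, single_aV hcg]⟩

theorem dHmat_spec {r s : ℕ} {a : (ℕ → ℕ → B) → K}
    (ha : ∀ N, BComp D (r + 1) (s + 1) N → Kb.proj (a N) = D.eV (D.l (N r 0)))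
    {M : ℕ → ℕ → B} (hM : BComp D (r + 1) (s + 2) M) :
    Kb.proj (dHmat D Kb Ac (r + 1) (s + 1) a M) = D.eV (D.l (M r 0)) ∧
      Kb.single (dHmat D Kb Ac (r + 1) (s + 1) a M) =
        Ac.hMap (D.b (M r 0)) (Kb.single (a fun i j => M i (j + 1))) +
          ∑ j : Fin (s + 1), (-1 : ℤ) ^ (j.val + 1) • Kb.single (a (mergeCol D j M)) +
          (-1 : ℤ) ^ (s + 1 + 1) • Kb.single (a M) := by
  have h0 : Kb.proj (a fun i j => M i (j + 1)) = D.eH (D.b (M r 0)) :=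
    (ha _ hM.dropCol).trans (by rw [← hM.1 r 0 (by omega) (by omega), D.corner_br])
  have hA : Kb.proj (Ac.aH (D.b (M r 0)) (a fun i j => M i (j + 1))) = D.eV (D.l (M r 0)) :=
    (Ac.aH_proj _ _ h0).trans (D.corner_bl _)
  have hf : ∀ j : Fin (s + 1), Kb.proj (a (mergeCol D j M)) = D.eV (D.l (M r 0)) := fun j =>
    (ha _ (hM.mergeCol j.2)).trans
      (congrArg D.eV (l_mergeCol_zero (hM.1 r 0 (by omega) (by omega))))
  have hl : Kb.proj (a M) = D.eV (D.l (M r 0)) := ha _ (hM.mono le_rfl (by omega))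
  simp only [dHmat, Nat.add_sub_cancel]
  exact ⟨proj_faceSum hA hf hl, by rw [single_faceSum hA hf hl, single_aH h0]⟩

theorem dVmat_spec {r s : ℕ} {a : (ℕ → ℕ → B) → K}
    (ha : ∀ N, BComp D (r + 1) (s + 1) N → Kb.proj (a N) = D.eV (D.l (N r 0)))
    {M : ℕ → ℕ → B} (hM : BComp D (r + 2) (s + 1) M) :
    Kb.proj (dVmat D Kb Ac (r + 1) (s + 1) a M) = D.eV (D.l (M (r + 1) 0)) ∧
      Kb.single (dVmat D Kb Ac (r + 1) (s + 1) a M) =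
        Kb.single (a fun i j => M (i + 1) j) +
          ∑ i : Fin (r + 1), (-1 : ℤ) ^ (i.val + 1) • Kb.single (a (mergeRow D i M)) +
          (-1 : ℤ) ^ (r + 1 + 1) • Ac.vMap (D.invV (D.l (M (r + 1) 0))) (Kb.single (a M)) := by
  have hcol : D.b (M r 0) = D.t (M (r + 1) 0) := hM.2 r 0 (by omega) (by omega)
  have h0 : Kb.proj (a fun i j => M (i + 1) j) = D.eV (D.l (M (r + 1) 0)) := ha _ hM.dropRow
  have hf : ∀ i : Fin (r + 1), Kb.proj (a (mergeRow D i M)) = D.eV (D.l (M (r + 1) 0)) :=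
    fun i => (ha _ (hM.mergeRow i.2)).trans (eV_l_mergeRow_last (Nat.lt_succ_iff.mp i.2) hcol)
  have haM : Kb.proj (a M) = D.eV (D.invV (D.l (M (r + 1) 0))) :=
    (ha _ (hM.mono (by omega) le_rfl)).trans
      (by rw [D.eV_inv, ← D.corner_tl, ← hcol, D.corner_bl])
  have hl : Kb.proj (Ac.aV (D.invV (D.l (M (r + 1) 0))) (a M)) = D.eV (D.l (M (r + 1) 0)) :=
    (Ac.aV_proj _ _ haM).trans (D.sV_inv _)
  exact ⟨proj_faceSum h0 hf hl, by rw [dVmat, single_faceSum h0 hf hl, single_aV haM]⟩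

end Differentials

section Commute

open AbBundle DAction

variable {B V H P K : Type*} {D : DGpd B V H P} {Kb : AbBundle P K} (Ac : DAction D Kb)

theorem dV0s_dH00_comm {a : P → K} (ha : ∀ p, Kb.proj (a p) = p) {M : ℕ → ℕ → B}
    (hM : BComp D 1 1 M) :
    dV0s D Kb Ac (dH00 D Kb Ac a) M = dHr0 D Kb Ac 1 (dV00 D Kb Ac a) M := by
  have hL := dV0s_spec Ac (fun x _ => (dH00_spec Ac ha x).1) hM
  have hR := dHr0_spec Ac (r := 0) (fun g _ => (dV00_spec Ac ha g).1) hM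
  refine eq_of_single_eq (hL.1.trans hR.1.symm) ?_
  rw [hL.2, hR.2, (dH00_spec Ac ha _).2, (dH00_spec Ac ha _).2, (dV00_spec Ac ha _).2,
    (dV00_spec Ac ha _).2]
  simp only [map_sub]
  rw [vMap_hMap_single _ (ha _)]
  simp only [D.corner_tl, D.corner_tr, D.corner_bl, D.corner_br]
  abel

theorem dV0s_dHbar_comm {s : ℕ} {a : (ℕ → H) → K}
    (ha : ∀ x, HComp D (s + 1) x → Kb.proj (a x) = D.sH (x 0))
    {M : ℕ → ℕ → B} (hM : BComp D 1 (s + 2) M) :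
    dV0s D Kb Ac (dHbar D Kb Ac (s + 1) a) M = dHmat D Kb Ac 1 (s + 1) (dV0s D Kb Ac a) M := by
  have hL := dV0s_spec Ac (fun x hx => (dHbar_spec Ac ha hx).1) hM
  have hR := dHmat_spec Ac (r := 0) (fun N hN => (dV0s_spec Ac ha hN).1) hM
  have hrow : ∀ j : Fin (s + 1), D.r (M 0 j) = D.l (M 0 (j + 1)) := fun j =>
    hM.1 0 j Nat.one_pos (by omega)
  have hfaces : ∀ j : Fin (s + 1), Kb.single (dV0s D Kb Ac a (mergeCol D j M)) =
      Kb.single (a (mergeH D j fun k => D.b (M 0 k))) -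
        Ac.vMap (D.invV (D.l (M 0 0))) (Kb.single (a (mergeH D j fun k => D.t (M 0 k)))) := by
    intro j
    rw [(dV0s_spec Ac ha (hM.mergeCol j.2)).2, mergeCol_bottom (hrow j), mergeCol_top (hrow j),
      l_mergeCol_zero (hrow ⟨0, Nat.succ_pos s⟩)]
  refine eq_of_single_eq (hL.1.trans hR.1.symm) ?_
  rw [hL.2, hR.2, (dHbar_spec Ac ha hM.hComp_bottom).2, (dHbar_spec Ac ha hM.hComp_top).2,
    (dV0s_spec Ac ha hM.dropCol).2, (dV0s_spec Ac ha (hM.mono le_rfl (by omega))).2,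
    Finset.sum_congr rfl fun j _ => congrArg _ (hfaces j)]
  simp only [map_add, map_sub, map_sum, map_zsmul, smul_sub, Finset.sum_sub_distrib]
  rw [vMap_hMap_single _ ((ha _ hM.hComp_top.tail).trans (hM.hComp_top 0 (by omega)).symm),
    hrow ⟨0, Nat.succ_pos s⟩]
  abel

theorem dVmat_dHr0_comm {r : ℕ} {c : (ℕ → V) → K}
    (hc : ∀ g, VComp D (r + 1) g → Kb.proj (c g) = D.eV (g r))
    {M : ℕ → ℕ → B} (hM : BComp D (r + 2) 1 M) :
    dVmat D Kb Ac (r + 1) 1 (dHr0 D Kb Ac (r + 1) c) M =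
      dHr0 D Kb Ac (r + 2) (dVbar D Kb Ac (r + 1) c) M := by
  have hL := dVmat_spec Ac (s := 0) (fun N hN => (dHr0_spec Ac hc hN).1) hM
  have hR := dHr0_spec Ac (r := r + 1) (fun g hg => (dVbar_spec Ac hc hg).1) hM
  have hcol : ∀ i, i ≤ r → D.b (M i 0) = D.t (M (i + 1) 0) := fun i hi =>
    hM.2 i 0 (by omega) Nat.one_pos
  have hfaces : ∀ i : Fin (r + 1), Kb.single (dHr0 D Kb Ac (r + 1) c (mergeRow D i M)) =
      Ac.hMap (D.b (M (r + 1) 0)) (Kb.single (c (mergeV D i fun k => D.r (M k 0)))) -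
        Kb.single (c (mergeV D i fun k => D.l (M k 0))) := by
    intro i
    have hi := Nat.lt_succ_iff.mp i.2
    rw [(dHr0_spec Ac hc (hM.mergeRow i.2)).2, mergeRow_right (hcol i hi),
      mergeRow_left (hcol i hi), b_mergeRow_last hi (hcol r le_rfl)]
  refine eq_of_single_eq (hL.1.trans hR.1.symm) ?_
  rw [hL.2, hR.2, (dVbar_spec Ac hc hM.vComp_right).2, (dVbar_spec Ac hc hM.vComp_left).2,
    (dHr0_spec Ac hc hM.dropRow).2, (dHr0_spec Ac hc (hM.mono (by omega) le_rfl)).2,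
    Finset.sum_congr rfl fun i _ => congrArg _ (hfaces i), hcol r le_rfl]
  simp only [map_add, map_sub, map_sum, map_zsmul, smul_sub, Finset.sum_sub_distrib]
  rw [vMap_hMap_single _ ((hc _ (hM.vComp_right.mono (by omega))).trans
    (by rw [← D.corner_br, hcol r le_rfl]))]
  abel

theorem single_dHmat_mergeRow {r s : ℕ} {a : (ℕ → ℕ → B) → K}
    (ha : ∀ N, BComp D (r + 1) (s + 1) N → Kb.proj (a N) = D.eV (D.l (N r 0)))
    {M : ℕ → ℕ → B} (hM : BComp D (r + 2) (s + 2) M) (i : Fin (r + 1)) :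
    Kb.single (dHmat D Kb Ac (r + 1) (s + 1) a (mergeRow D i M)) =
      Ac.hMap (D.b (M (r + 1) 0)) (Kb.single (a fun k j => mergeRow D i M k (j + 1))) +
        ∑ j : Fin (s + 1), (-1 : ℤ) ^ (j.val + 1) •
          Kb.single (a (mergeRow D i (mergeCol D j M))) +
        (-1 : ℤ) ^ (s + 1 + 1) • Kb.single (a (mergeRow D i M)) := by
  rw [(dHmat_spec Ac ha (hM.mergeRow i.2)).2,
    b_mergeRow_last (Nat.lt_succ_iff.mp i.2) (hM.2 r 0 (by omega) (by omega))]
  congr 3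
  funext j
  rw [mergeRow_mergeCol hM i.2 j.2]

theorem single_dVmat_mergeCol {r s : ℕ} {a : (ℕ → ℕ → B) → K}
    (ha : ∀ N, BComp D (r + 1) (s + 1) N → Kb.proj (a N) = D.eV (D.l (N r 0)))
    {M : ℕ → ℕ → B} (hM : BComp D (r + 2) (s + 2) M) (j : Fin (s + 1)) :
    Kb.single (dVmat D Kb Ac (r + 1) (s + 1) a (mergeCol D j M)) =
      Kb.single (a fun i k => mergeCol D j M (i + 1) k) +
        ∑ i : Fin (r + 1), (-1 : ℤ) ^ (i.val + 1) •
          Kb.single (a (mergeRow D i (mergeCol D j M))) +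
        (-1 : ℤ) ^ (r + 1 + 1) •
          Ac.vMap (D.invV (D.l (M (r + 1) 0))) (Kb.single (a (mergeCol D j M))) := by
  rw [(dVmat_spec Ac ha (hM.mergeCol j.2)).2,
    l_mergeCol_zero (hM.1 (r + 1) 0 (by omega) (by omega))]

theorem dVmat_dHmat_comm {r s : ℕ} {a : (ℕ → ℕ → B) → K}
    (ha : ∀ N, BComp D (r + 1) (s + 1) N → Kb.proj (a N) = D.eV (D.l (N r 0)))
    {M : ℕ → ℕ → B} (hM : BComp D (r + 2) (s + 2) M) :
    dVmat D Kb Ac (r + 1) (s + 2) (dHmat D Kb Ac (r + 1) (s + 1) a) M =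
      dHmat D Kb Ac (r + 2) (s + 1) (dVmat D Kb Ac (r + 1) (s + 1) a) M := by
  have hL := dVmat_spec Ac (s := s + 1) (fun N hN => (dHmat_spec Ac ha hN).1) hM
  have hR := dHmat_spec Ac (r := r + 1) (fun N hN => (dVmat_spec Ac ha hN).1) hM
  have hcol : D.b (M r 0) = D.t (M (r + 1) 0) := hM.2 r 0 (by omega) (by omega)
  have hrow : ∀ i, i ≤ r + 1 → D.r (M i 0) = D.l (M i 1) := fun i hi =>
    hM.1 i 0 (by omega) (by omega)
  refine eq_of_single_eq (hL.1.trans hR.1.symm) ?_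
  rw [hL.2, hR.2, (dHmat_spec Ac ha hM.dropRow).2,
    (dHmat_spec Ac ha (hM.mono (by omega) le_rfl)).2, (dVmat_spec Ac ha hM.dropCol).2,
    (dVmat_spec Ac ha (hM.mono le_rfl (by omega))).2,
    Finset.sum_congr rfl fun i _ => congrArg _ (single_dHmat_mergeRow Ac ha hM i),
    Finset.sum_congr rfl fun j _ => congrArg _ (single_dVmat_mergeCol Ac ha hM j), hcol]
  simp only [mergeRow_dropCol, mergeCol_dropRow, map_add, map_sum, map_zsmul, smul_add,
    Finset.smul_sum, Finset.sum_add_distrib]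
  rw [vMap_hMap_single _ ((ha _ (hM.dropCol.mono (by omega) le_rfl)).trans
      (by rw [← hrow r (by omega), ← D.corner_br, hcol])),
    hrow (r + 1) le_rfl, Finset.sum_comm]
  simp only [smul_smul, mul_comm]
  abel

end Commute

section Stmt5

variable {B V H P K : Type*}

/-- The vertical and horizontal coboundary maps of the double complex
of a double groupoid commute: for all `r, s ≥ 0`, `d_V ∘ d_H = d_H ∘ d_V` as maps
`D^{r,s} → D^{r+1,s+1}`, where `D^{r,s}` consists of the normalized `K`-valued
functions on the set `F^{(r,s)}` of composable `r × s` matrices of boxes.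
The four conjuncts correspond to the cases `(0,0)`, `(0,s)` with `s ≥ 1`,
`(r,0)` with `r ≥ 1`, and `(r,s)` with `r, s ≥ 1`. -/
theorem dV_dH_commute (D : DGpd B V H P) (Kb : AbBundle P K) (Ac : DAction D Kb) :
    -- case r = 0, s = 0
    (∀ a : P → K, (∀ p, Kb.proj (a p) = p) →
      ∀ M : ℕ → ℕ → B, BComp D 1 1 M →
        dV0s D Kb Ac (dH00 D Kb Ac a) M = dHr0 D Kb Ac 1 (dV00 D Kb Ac a) M) ∧
    -- case r = 0, s ≥ 1
    (∀ (s : ℕ) (a : (ℕ → H) → K),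
      (∀ x, HComp D (s + 1) x → Kb.proj (a x) = D.sH (x 0)) →
      (∀ x, HComp D (s + 1) x → 1 ≤ s → (∃ i, i < s + 1 ∧ ∃ p, x i = D.idH p) →
        a x = Kb.zero (D.sH (x 0))) →
      ∀ M : ℕ → ℕ → B, BComp D 1 (s + 2) M →
        dV0s D Kb Ac (dHbar D Kb Ac (s + 1) a) M =
          dHmat D Kb Ac 1 (s + 1) (dV0s D Kb Ac a) M) ∧
    -- case r ≥ 1, s = 0
    (∀ (r : ℕ) (b : (ℕ → V) → K),
      (∀ g, VComp D (r + 1) g → Kb.proj (b g) = D.eV (g r)) →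
      (∀ g, VComp D (r + 1) g → 1 ≤ r → (∃ i, i < r + 1 ∧ ∃ p, g i = D.idV p) →
        b g = Kb.zero (D.eV (g r))) →
      ∀ M : ℕ → ℕ → B, BComp D (r + 2) 1 M →
        dVmat D Kb Ac (r + 1) 1 (dHr0 D Kb Ac (r + 1) b) M =
          dHr0 D Kb Ac (r + 2) (dVbar D Kb Ac (r + 1) b) M) ∧
    -- interior case r ≥ 1, s ≥ 1
    (∀ (r s : ℕ) (a : (ℕ → ℕ → B) → K),
      (∀ M, BComp D (r + 1) (s + 1) M → Kb.proj (a M) = D.eV (D.l (M r 0))) →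
      (∀ M, BComp D (r + 1) (s + 1) M → 1 ≤ r →
        (∃ i j, i < r + 1 ∧ j < s + 1 ∧ ∃ g, M i j = D.idh g) →
        a M = Kb.zero (D.eV (D.l (M r 0)))) →
      (∀ M, BComp D (r + 1) (s + 1) M → 1 ≤ s →
        (∃ i j, i < r + 1 ∧ j < s + 1 ∧ ∃ x, M i j = D.idv x) →
        a M = Kb.zero (D.eV (D.l (M r 0)))) →
      ∀ M : ℕ → ℕ → B, BComp D (r + 2) (s + 2) M →
        dVmat D Kb Ac (r + 1) (s + 2) (dHmat D Kb Ac (r + 1) (s + 1) a) M =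
          dHmat D Kb Ac (r + 2) (s + 1) (dVmat D Kb Ac (r + 1) (s + 1) a) M) :=
  ⟨fun _ ha _ hM => dV0s_dH00_comm Ac ha hM,
    fun _ _ ha _ _ hM => dV0s_dHbar_comm Ac ha hM,
    fun _ _ hc _ _ hM => dVmat_dHr0_comm Ac hc hM,
    fun _ _ _ ha _ _ _ hM => dVmat_dHmat_comm Ac ha hM⟩

end Stmt5
end
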